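/- arXiv:0810.3670 — 2 statements merged into one kernel-verified Lean document; each statement's English description precedes it below -/
import Mathlib

section
/- Let C=(A,B,≺) be a one-factor two-chain cover with elements a_1≺...≺a_k in A and b_1≺...≺b_{n-k} in B, and let (V,W)=Γ(C) be the associated non-hitting walks. Let t_V(i) (resp. t_W(i)) be the first time V (resp. W) has taken i up-steps. Then the number of elements incomparable to a_i equals t_W(i) − t_V(i). -/
open scoped Classical

/-- A two-chain cover on `[n]`: a (strict) partial order on `Fin n` whose ground set is
partitioned into two chains, `A` and its complement `B = Aᶜ`. -/
structure TwoChainCover (n : ℕ) where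
  lt : Fin n → Fin n → Prop
  irrefl : ∀ x, ¬lt x x
  trans : ∀ x y z, lt x y → lt y z → lt x z
  A : Finset (Fin n)
  chainA : ∀ x ∈ A, ∀ y ∈ A, x ≠ y → lt x y ∨ lt y x
  chainB : ∀ x y : Fin n, x ∉ A → y ∉ A → x ≠ y → lt x y ∨ lt y x

namespace TwoChainCover

variable {n : ℕ}

/-- The incomparability graph of a two-chain cover: `x ∼ y` iff `x ≠ y` and `x, y` are
incomparable in the partial order. -/
def incompGraph (C : TwoChainCover n) : SimpleGraph (Fin n) where
  Adj x y := x ≠ y ∧ ¬C.lt x y ∧ ¬C.lt y x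
  symm := by refine ⟨?_⟩; intro x y h; exact ⟨h.1.symm, h.2.2, h.2.1⟩
  loopless := by refine ⟨?_⟩; intro x h; exact h.1 rfl

/-- A two-chain cover has one factor if its incomparability graph is connected. -/
def OneFactor (C : TwoChainCover n) : Prop := C.incompGraph.Connected

/-- `(λ, δ)` is the greedy pair of linear orders of the cover `C`: both are linear
extensions of the partial order (here given as equivs `Fin n ≃ Fin n`, where `λ i` is the
element in position `i`, so that `λ.symm` records ranks), and every incomparable pair
`a ∈ A`, `b ∈ B` is resolved as `a` before `b` in `λ` and `b` before `a` in `δ`. -/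
def GreedyPair (C : TwoChainCover n) (lam del : Fin n ≃ Fin n) : Prop :=
  (∀ x y, C.lt x y → lam.symm x < lam.symm y) ∧
  (∀ x y, C.lt x y → del.symm x < del.symm y) ∧
  (∀ a ∈ C.A, ∀ b : Fin n, b ∉ C.A → ¬C.lt a b → ¬C.lt b a →
    lam.symm a < lam.symm b ∧ del.symm b < del.symm a)

/-- The walk associated with a linear order `e` (so `Γ(C) = (walk C λ, walk C δ)`): at
step `i + 1` the walk goes up if the element in position `i` lies in the chain `A`, and
down otherwise. -/
def walk (C : TwoChainCover n) (e : Fin n ≃ Fin n) : ℕ → ℤ := fun t =>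
  ∑ i ∈ Finset.univ.filter (fun i : Fin n => (i : ℕ) < t),
    (if e i ∈ C.A then (1 : ℤ) else -1)

/-- The incomparability window of `c`: the number of elements incomparable to `c`. -/
noncomputable def window (C : TwoChainCover n) (c : Fin n) : ℕ :=
  (Finset.univ.filter fun y : Fin n => y ≠ c ∧ ¬C.lt y c ∧ ¬C.lt c y).card

/-- `τ(c)`: the number of elements `y ⪯ c`. -/
noncomputable def tau (C : TwoChainCover n) (c : Fin n) : ℕ :=
  (Finset.univ.filter fun y : Fin n => C.lt y c ∨ y = c).card

/-- The rank of `a` within the chain `A` (so `a = a_i` with `i = rankA C a`). -/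
noncomputable def rankA (C : TwoChainCover n) (a : Fin n) : ℕ :=
  (Finset.univ.filter fun y : Fin n => y ∈ C.A ∧ C.lt y a).card + 1

/-- The rank of `b` within the chain `B = Aᶜ` (so `b = b_j` with `j = rankB C b`). -/
noncomputable def rankB (C : TwoChainCover n) (b : Fin n) : ℕ :=
  (Finset.univ.filter fun y : Fin n => y ∉ C.A ∧ C.lt y b).card + 1

/-- The first time the walk associated with `e` has taken `i` up-steps. -/
noncomputable def tUp (C : TwoChainCover n) (e : Fin n ≃ Fin n) (i : ℕ) : ℕ :=
  sInf {t : ℕ | i ≤ (Finset.univ.filter fun j : Fin n => (j : ℕ) < t ∧ e j ∈ C.A).card}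

/-- The first time the walk associated with `e` has taken `j` down-steps. -/
noncomputable def tDown (C : TwoChainCover n) (e : Fin n ≃ Fin n) (j : ℕ) : ℕ :=
  sInf {t : ℕ | j ≤ (Finset.univ.filter fun i : Fin n => (i : ℕ) < t ∧ e i ∉ C.A).card}

end TwoChainCover

/-!
In any linear extension `e` of the order, the elements of `A` preceding `a_i` are exactly
`a_1, …, a_{i-1}`, so the `i`-th up-step of the walk of `e` is taken at the position of `a_i`:
`t(i) = pos_e(a_i) + 1`. In `λ` the elements preceding `a_i` are exactly those below it, because
an element incomparable to `a_i` lies in `B` and the greedy rule puts it after `a_i`; in `δ` the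
same rule puts every incomparable element before `a_i`. The two positions therefore differ by
the number of elements incomparable to `a_i`.
-/

open Finset

lemma card_filter_symm_lt {α : Type*} [Fintype α] {n : ℕ} (e : Fin n ≃ α) (p : Fin n) :
    #{y : α | e.symm y < p} = p := by
  rw [card_equiv e.symm (t := Iio p) (by simp), Fin.card_Iio]

namespace TwoChainCover

variable {n : ℕ} (C : TwoChainCover n)

def IsLinearExtension (e : Fin n ≃ Fin n) : Prop :=
  ∀ x y, C.lt x y → e.symm x < e.symm y

def upCount (e : Fin n ≃ Fin n) (t : ℕ) : ℕ :=
  #{j : Fin n | (j : ℕ) < t ∧ e j ∈ C.A}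

variable {C}

lemma upCount_mono (e : Fin n ≃ Fin n) : Monotone (C.upCount e) := fun _ _ hst =>
  card_le_card <| monotone_filter_right _ fun _ _ hj => ⟨hj.1.trans_le hst, hj.2⟩

lemma tUp_eq_succ {e : Fin n ≃ Fin n} {i p : ℕ} (hlt : C.upCount e p < i)
    (hle : i ≤ C.upCount e (p + 1)) : C.tUp e i = p + 1 :=
  (Nat.sInf_upward_closed_eq_succ_iff
    (fun _ _ hst hi => hi.trans (upCount_mono e hst)) p).2 ⟨hle, not_le.2 hlt⟩

lemma upCount_succ_of_mem {e : Fin n ≃ Fin n} {p : Fin n} (hp : e p ∈ C.A) :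
    C.upCount e (p + 1) = C.upCount e p + 1 := by
  have hsplit : filter (fun j : Fin n => (j : ℕ) < p + 1 ∧ e j ∈ C.A) univ
      = insert p (filter (fun j : Fin n => (j : ℕ) < p ∧ e j ∈ C.A) univ) := by
    ext j
    simp only [mem_filter, mem_univ, true_and, mem_insert, Nat.lt_succ_iff_lt_or_eq,
      Fin.val_inj]
    constructor
    · rintro ⟨hj | rfl, hjA⟩
      exacts [Or.inr ⟨hj, hjA⟩, Or.inl rfl]
    · rintro (rfl | ⟨hj, hjA⟩)
      exacts [⟨Or.inr rfl, hp⟩, ⟨Or.inl hj, hjA⟩]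
  rw [upCount, hsplit, card_insert_of_notMem (by simp), upCount]

lemma IsLinearExtension.upCount_symm {e : Fin n ≃ Fin n} (he : C.IsLinearExtension e)
    {a : Fin n} (ha : a ∈ C.A) : C.upCount e (e.symm a) = #{y | y ∈ C.A ∧ C.lt y a} := by
  refine card_equiv e (fun j => ?_)
  simp only [mem_filter, mem_univ, true_and, Fin.val_fin_lt]
  refine ⟨fun ⟨hj, hjA⟩ => ⟨hjA, ?_⟩, fun ⟨hjA, hlt⟩ => ⟨by simpa using he _ _ hlt, hjA⟩⟩
  have hne : e j ≠ a := by rintro rfl; simp at hj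
  refine (C.chainA _ hjA _ ha hne).resolve_right fun hgt => ?_
  exact lt_asymm hj (by simpa using he _ _ hgt)

lemma IsLinearExtension.tUp_rankA {e : Fin n ≃ Fin n} (he : C.IsLinearExtension e)
    {a : Fin n} (ha : a ∈ C.A) : C.tUp e (C.rankA a) = e.symm a + 1 := by
  have hup := upCount_succ_of_mem (e := e) (p := e.symm a) (by simpa using ha)
  have hbefore := he.upCount_symm ha
  exact tUp_eq_succ (by rw [rankA]; omega) (by rw [rankA]; omega)

lemma notMem_A_of_incomparable {a y : Fin n} (ha : a ∈ C.A) (hne : y ≠ a)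
    (hya : ¬C.lt y a) (hay : ¬C.lt a y) : y ∉ C.A := fun hy =>
  (C.chainA _ hy _ ha hne).elim hya hay

namespace GreedyPair

variable {lam del : Fin n ≃ Fin n} (hg : C.GreedyPair lam del) {a : Fin n} (ha : a ∈ C.A)
include hg ha

lemma lam_symm_eq : (lam.symm a : ℕ) = #{y | C.lt y a} := by
  rw [← card_filter_symm_lt lam (lam.symm a)]
  congr 1
  ext y
  simp only [mem_filter, mem_univ, true_and]
  refine ⟨fun hy => ?_, hg.1 _ a⟩
  have hne : y ≠ a := by rintro rfl; exact lt_irrefl _ hy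
  by_contra hya
  have hay : ¬C.lt a y := fun h => (hg.1 _ _ h).not_gt hy
  exact (hg.2.2 a ha y (notMem_A_of_incomparable ha hne hya hay) hay hya).1.not_gt hy

lemma del_symm_eq : (del.symm a : ℕ) = #{y | C.lt y a} + C.window a := by
  have hsplit : filter (fun y => del.symm y < del.symm a) univ
      = filter (fun y => C.lt y a) univ ∪
          filter (fun y => y ≠ a ∧ ¬C.lt y a ∧ ¬C.lt a y) univ := by
    ext y
    simp only [mem_filter, mem_univ, true_and, mem_union]
    constructor
    · intro hy
      have hne : y ≠ a := by rintro rfl; exact lt_irrefl _ hy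
      exact or_iff_not_imp_left.2 fun hya => ⟨hne, hya, fun h => (hg.2.1 _ _ h).not_gt hy⟩
    · rintro (hya | ⟨hne, hya, hay⟩)
      exacts [hg.2.1 _ _ hya, (hg.2.2 a ha y (notMem_A_of_incomparable ha hne hya hay) hay hya).2]
  have hdisj : Disjoint (filter (fun y => C.lt y a) univ)
      (filter (fun y => y ≠ a ∧ ¬C.lt y a ∧ ¬C.lt a y) univ) :=
    disjoint_filter.2 fun _ _ hya h => h.2.1 hya
  rw [← card_filter_symm_lt del (del.symm a), hsplit, card_union_of_disjoint hdisj, window]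

end GreedyPair

end TwoChainCover

open TwoChainCover in
theorem window_eq_tW_sub_tV_general (n : ℕ) (C : TwoChainCover n)
    (lam del : Fin n ≃ Fin n) (hg : C.GreedyPair lam del) :
    ∀ a ∈ C.A,
      (C.window a : ℤ) = (C.tUp del (C.rankA a) : ℤ) - (C.tUp lam (C.rankA a) : ℤ) := by
  intro a ha
  have hlam : C.IsLinearExtension lam := hg.1
  have hdel : C.IsLinearExtension del := hg.2.1
  rw [hdel.tUp_rankA ha, hlam.tUp_rankA ha, hg.del_symm_eq ha, hg.lam_symm_eq ha]
  push_cast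
  ring

open TwoChainCover in
/-- Let `C = (A, B, ≺)` be a one-factor two-chain cover with greedy pair `(λ, δ)` and
associated non-hitting walks `(V, W) = (walk C λ, walk C δ)`.  For `a = a_i` the `i`-th
smallest element of `A`, the number of elements incomparable to `a_i` equals
`t_W(i) - t_V(i)`, where `t_V(i)` (resp. `t_W(i)`) is the first time `V` (resp. `W`) has
taken `i` up-steps. -/
theorem window_eq_tW_sub_tV (n : ℕ) (C : TwoChainCover n)
    (lam del : Fin n ≃ Fin n) (h1 : C.OneFactor) (hg : C.GreedyPair lam del) :
    ∀ a ∈ C.A,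
      (C.window a : ℤ) = (C.tUp del (C.rankA a) : ℤ) - (C.tUp lam (C.rankA a) : ℤ) :=
  window_eq_tW_sub_tV_general n C lam del hg
end

section
/- With notation as above, I_C(a_i) = H(t_V(i)) + W(t_V(i)) − W(t_V(i) + I_C(a_i)), where H(t)=V(t)−W(t). Symmetrically, letting s_W(j) be the first time W has taken j down-steps, I_C(b_j) = V(s_W(j)+I_C(b_j)) − V(s_W(j)) + H(s_W(j)). -/
open scoped Classical

/-!
In `λ` the elements before `a ∈ A` are exactly those below `a`: an incomparable element of
`A` cannot exist and the incomparable elements of `B` are put after `a`. In `δ` those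
incomparable elements are put before `a`, so `a` sits `I_C(a)` places later there. Comparing
the walks just after `a` in each order, both have taken the same up-steps, and `W` has taken
`I_C(a)` extra down-steps. The statement for `b ∈ B` is the same one after exchanging the
chains and the two orders.
-/

namespace TwoChainCover

open Finset

variable {n : ℕ}

def elemsBefore (e : Fin n ≃ Fin n) (t : ℕ) : Finset (Fin n) :=
  univ.filter fun y => (e.symm y : ℕ) < t

noncomputable def incomparables (C : TwoChainCover n) (c : Fin n) : Finset (Fin n) :=
  univ.filter fun y => y ≠ c ∧ ¬C.lt y c ∧ ¬C.lt c y

lemma window_eq_card_incomparables (C : TwoChainCover n) (c : Fin n) :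
    C.window c = #(C.incomparables c) := rfl

section Positions

variable (e : Fin n ≃ Fin n)

lemma card_elemsBefore_symm (c : Fin n) : #(elemsBefore e (e.symm c)) = e.symm c := by
  rw [← Fin.card_Iio (e.symm c)]
  exact card_equiv e.symm (by simp [elemsBefore])

lemma elemsBefore_symm_add_one (c : Fin n) :
    elemsBefore e (e.symm c + 1) = insert c (elemsBefore e (e.symm c)) := by
  ext y
  simp only [elemsBefore, mem_filter, mem_univ, true_and, mem_insert, Nat.lt_succ_iff_lt_or_eq,
    Fin.val_inj, e.symm.apply_eq_iff_eq, or_comm]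

lemma elemsBefore_mono : Monotone (elemsBefore e) :=
  fun _ _ hst _ hy => by
    simp only [elemsBefore, mem_filter, mem_univ, true_and] at hy ⊢
    omega

lemma self_notMem_elemsBefore_symm (c : Fin n) : c ∉ elemsBefore e (e.symm c) := by
  simp [elemsBefore]

lemma card_filter_lt_apply (t : ℕ) (P : Fin n → Prop) [DecidablePred P] :
    #(univ.filter fun j : Fin n => (j : ℕ) < t ∧ P (e j)) = #((elemsBefore e t).filter P) := by
  rw [elemsBefore, filter_filter]
  exact card_equiv e (by simp)

end Positions

lemma walk_eq_sum_elemsBefore (C : TwoChainCover n) (e : Fin n ≃ Fin n) (t : ℕ) :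
    C.walk e t = ∑ y ∈ elemsBefore e t, if y ∈ C.A then 1 else -1 :=
  sum_equiv e (by simp [elemsBefore]) (fun _ _ => rfl)

lemma tUp_eq_symm_add_one (C : TwoChainCover n) (e : Fin n ≃ Fin n) {a : Fin n}
    (ha : a ∈ C.A) :
    C.tUp e (#((elemsBefore e (e.symm a)).filter fun y => y ∈ C.A) + 1) = e.symm a + 1 := by
  unfold tUp
  simp only [card_filter_lt_apply]
  rw [Nat.sInf_upward_closed_eq_succ_iff]
  · simp only [Set.mem_ofPred_eq, elemsBefore_symm_add_one, filter_insert, if_pos ha,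
      card_insert_of_notMem (fun h => self_notMem_elemsBefore_symm e a (mem_filter.1 h).1)]
    exact ⟨le_rfl, Nat.not_succ_le_self _⟩
  · intro s₁ s₂ hs h
    exact h.trans (card_le_card (filter_subset_filter _ (elemsBefore_mono e hs)))

noncomputable def below (C : TwoChainCover n) (c : Fin n) : Finset (Fin n) :=
  univ.filter fun y => C.lt y c

lemma disjoint_below_incomparables (C : TwoChainCover n) (c : Fin n) :
    Disjoint (C.below c) (C.incomparables c) :=
  disjoint_filter.2 fun _ _ hlt h => h.2.1 hlt

lemma notMem_A_of_mem_incomparables {C : TwoChainCover n} {a y : Fin n} (ha : a ∈ C.A)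
    (hy : y ∈ C.incomparables a) : y ∉ C.A := by
  obtain ⟨hne, hya, hay⟩ := (mem_filter.1 hy).2
  intro hyA
  rcases C.chainA a ha y hyA hne.symm with h | h
  exacts [hay h, hya h]

namespace GreedyPair

variable {C : TwoChainCover n} {lam del : Fin n ≃ Fin n} {a : Fin n}

lemma elemsBefore_fst (hg : C.GreedyPair lam del) (ha : a ∈ C.A) :
    elemsBefore lam (lam.symm a) = C.below a := by
  ext y
  simp only [elemsBefore, below, mem_filter, mem_univ, true_and, Fin.val_fin_lt]
  refine ⟨fun h => ?_, hg.1 y a⟩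
  by_contra hya
  have hay : ¬C.lt a y := fun hay => (hg.1 a y hay).asymm h
  have hne : y ≠ a := by rintro rfl; exact lt_irrefl _ h
  have hyA : y ∉ C.A := notMem_A_of_mem_incomparables ha (by simp [incomparables, *])
  exact (hg.2.2 a ha y hyA hay hya).1.asymm h

lemma elemsBefore_snd (hg : C.GreedyPair lam del) (ha : a ∈ C.A) :
    elemsBefore del (del.symm a) = C.below a ∪ C.incomparables a := by
  ext y
  simp only [elemsBefore, below, incomparables, mem_union, mem_filter, mem_univ, true_and,
    Fin.val_fin_lt]
  constructor
  · intro h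
    by_cases hya : C.lt y a
    · exact .inl hya
    · refine .inr ⟨?_, hya, fun hay => (hg.2.1 a y hay).asymm h⟩
      rintro rfl
      exact lt_irrefl _ h
  · rintro (hya | hy)
    · exact hg.2.1 y a hya
    · have hyA := notMem_A_of_mem_incomparables ha (by simpa [incomparables] using hy)
      exact (hg.2.2 a ha y hyA hy.2.2 hy.2.1).2

end GreedyPair

theorem window_eq_walk_sub_walk {C : TwoChainCover n} {lam del : Fin n ≃ Fin n} {a : Fin n}
    (hg : C.GreedyPair lam del) (ha : a ∈ C.A) :
    (C.window a : ℤ) = C.walk lam (C.tUp lam (C.rankA a)) -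
      C.walk del (C.tUp lam (C.rankA a) + C.window a) := by
  have hbefore := hg.elemsBefore_fst ha
  have hdisj := C.disjoint_below_incomparables a
  have hrank : C.rankA a = #((elemsBefore lam (lam.symm a)).filter fun y => y ∈ C.A) + 1 := by
    simp only [hbefore, below, filter_filter, rankA, and_comm]
  have hpos : (lam.symm a : ℕ) + 1 + C.window a = del.symm a + 1 := by
    rw [← card_elemsBefore_symm lam a, ← card_elemsBefore_symm del a, hbefore,
      hg.elemsBefore_snd ha, card_union_of_disjoint hdisj, window_eq_card_incomparables,
      add_right_comm]
  have hsign : ∑ y ∈ C.incomparables a, (if y ∈ C.A then 1 else -1 : ℤ) = -C.window a := by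
    rw [sum_congr rfl fun y hy => if_neg (notMem_A_of_mem_incomparables ha hy)]
    simp [window_eq_card_incomparables]
  rw [hrank, tUp_eq_symm_add_one C lam ha, hpos, walk_eq_sum_elemsBefore,
    walk_eq_sum_elemsBefore, elemsBefore_symm_add_one, elemsBefore_symm_add_one,
    sum_insert (self_notMem_elemsBefore_symm lam a),
    sum_insert (self_notMem_elemsBefore_symm del a), hbefore, hg.elemsBefore_snd ha,
    sum_union hdisj, hsign]
  ring

def swapChains (C : TwoChainCover n) : TwoChainCover n where
  lt := C.lt
  irrefl := C.irrefl
  trans := C.trans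
  A := C.Aᶜ
  chainA x hx y hy := C.chainB x y (mem_compl.1 hx) (mem_compl.1 hy)
  chainB x y hx hy :=
    C.chainA x (not_not.1 (mem_compl.not.1 hx)) y (not_not.1 (mem_compl.not.1 hy))

section SwapChains

variable (C : TwoChainCover n) (e : Fin n ≃ Fin n)

@[simp]
lemma window_swapChains (c : Fin n) : C.swapChains.window c = C.window c := rfl

@[simp]
lemma walk_swapChains (t : ℕ) : C.swapChains.walk e t = -C.walk e t := by
  simp only [walk, ← sum_neg_distrib]
  refine sum_congr rfl fun i _ => ?_
  by_cases h : e i ∈ C.A <;> simp [swapChains, h]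

@[simp]
lemma rankA_swapChains (b : Fin n) : C.swapChains.rankA b = C.rankB b := by
  simp [rankA, rankB, swapChains]

@[simp]
lemma tUp_swapChains (j : ℕ) : C.swapChains.tUp e j = C.tDown e j := by
  simp [tUp, tDown, swapChains]

end SwapChains

lemma GreedyPair.swapChains {C : TwoChainCover n} {lam del : Fin n ≃ Fin n}
    (hg : C.GreedyPair lam del) :
    C.swapChains.GreedyPair del lam := by
  refine ⟨hg.2.1, hg.1, fun b hb a ha hba hab => (hg.2.2 a ?_ b ?_ hab hba).symm⟩
  · simpa [TwoChainCover.swapChains] using ha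
  · simpa [TwoChainCover.swapChains] using hb

end TwoChainCover

open TwoChainCover in
theorem window_height_identities_general (n : ℕ) (C : TwoChainCover n)
    (lam del : Fin n ≃ Fin n) (hg : C.GreedyPair lam del) :
    (∀ a ∈ C.A,
      (C.window a : ℤ) =
        (C.walk lam (C.tUp lam (C.rankA a)) - C.walk del (C.tUp lam (C.rankA a))) +
          C.walk del (C.tUp lam (C.rankA a)) -
          C.walk del (C.tUp lam (C.rankA a) + C.window a)) ∧
    (∀ b : Fin n, b ∉ C.A →
      (C.window b : ℤ) =
        C.walk lam (C.tDown del (C.rankB b) + C.window b) -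
          C.walk lam (C.tDown del (C.rankB b)) +
          (C.walk lam (C.tDown del (C.rankB b)) - C.walk del (C.tDown del (C.rankB b)))) := by
  refine ⟨fun a ha => ?_, fun b hb => ?_⟩
  · have h := window_eq_walk_sub_walk hg ha
    linarith
  · have h := window_eq_walk_sub_walk hg.swapChains (Finset.mem_compl.2 hb)
    simp only [window_swapChains, rankA_swapChains, tUp_swapChains, walk_swapChains] at h
    linarith

open TwoChainCover in
/-- With `C = (A, B, ≺)` a one-factor two-chain cover, greedy pair `(λ, δ)`, associated
walks `(V, W)` and height `H(t) = V t - W t`: for `a = a_i` the `i`-th element of `A`,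
`I_C(a_i) = H(t_V(i)) + W(t_V(i)) - W(t_V(i) + I_C(a_i))`; and symmetrically for
`b = b_j` the `j`-th element of `B`, with `s_W(j)` the first time `W` has taken `j`
down-steps, `I_C(b_j) = V(s_W(j) + I_C(b_j)) - V(s_W(j)) + H(s_W(j))`. -/
theorem window_height_identities (n : ℕ) (C : TwoChainCover n)
    (lam del : Fin n ≃ Fin n) (h1 : C.OneFactor) (hg : C.GreedyPair lam del) :
    (∀ a ∈ C.A,
      (C.window a : ℤ) =
        (C.walk lam (C.tUp lam (C.rankA a)) - C.walk del (C.tUp lam (C.rankA a))) +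
          C.walk del (C.tUp lam (C.rankA a)) -
          C.walk del (C.tUp lam (C.rankA a) + C.window a)) ∧
    (∀ b : Fin n, b ∉ C.A →
      (C.window b : ℤ) =
        C.walk lam (C.tDown del (C.rankB b) + C.window b) -
          C.walk lam (C.tDown del (C.rankB b)) +
          (C.walk lam (C.tDown del (C.rankB b)) - C.walk del (C.tDown del (C.rankB b)))) :=
  window_height_identities_general n C lam del hg
end
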